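/- Let n ≥ 3 be odd. Then the poset P_{n+1} (subsets of [n+1] arising as circular peak sets of permutations of [n+1], ordered by inclusion) is order-isomorphic to the subposet of the product poset {0,1} × P_n obtained by removing all pairs (1, S) with |S| = ⌊(n−1)/2⌋, where {0,1} carries the order 0 < 1 and the product is ordered componentwise. An explicit isomorphism sends S ∈ P_{n+1} to (1, S \ {n+1}) if n+1 ∈ S and to (0, S) otherwise. -/

import Mathlib

open Finset Polynomial

/-- `σ` is a permutation of `[n] = {1, …, n}` (viewed as a function `ℕ → ℕ`
restricted to a bijection of `{1, …, n}` onto itself). -/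
def IsPermOn (n : ℕ) (σ : ℕ → ℕ) : Prop :=
  Set.BijOn σ (Set.Icc 1 n) (Set.Icc 1 n)

/-- The circular peak set of `σ` (as a permutation of `[n]`):
`CP(σ) = {σ(i) : 2 ≤ i ≤ n−1, σ(i−1) < σ(i) > σ(i+1)}`. -/
def CP (n : ℕ) (σ : ℕ → ℕ) : Finset ℕ :=
  ((Finset.Icc 2 (n - 1)).filter (fun i => σ (i - 1) < σ i ∧ σ (i + 1) < σ i)).image σ

open scoped Classical in
/-- `Pn n` is the collection of all subsets `S ⊆ [n]` arising as the circular peak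
set of some permutation of `[n]`. -/
noncomputable def Pn (n : ℕ) : Finset (Finset ℕ) :=
  (Finset.Icc 1 n).powerset.filter (fun S => ∃ σ : ℕ → ℕ, IsPermOn n σ ∧ CP n σ = S)

/-- `pcount n k` is the number of members of `Pn n` of cardinality `k`;
in the paper's notation, `p_{n,i} = pcount n (i+1)`. -/
noncomputable def pcount (n k : ℕ) : ℕ :=
  ((Pn n).filter (fun S => S.card = k)).card

/-- The f-polynomial `P_n(x) = Σ_{i=0}^{⌊(n−1)/2⌋} p_{n,i−1} x^{⌊(n−1)/2⌋−i}`. -/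
noncomputable def fpoly (n : ℕ) : Polynomial ℚ :=
  ∑ i ∈ Finset.range ((n - 1) / 2 + 1),
    Polynomial.C (pcount n i : ℚ) * Polynomial.X ^ ((n - 1) / 2 - i)

/-!
A set `S ⊆ [n]` is the peak set of a permutation of `[n]` iff, for every `s ∈ S`, fewer than
`s / 2` elements of `S` are at most `s`. Necessity: the `k` peaks with value at most `s` sit at
pairwise non-adjacent positions, so together with their neighbours they occupy at least `2k + 1`
positions, all carrying values in `[1, s]`. Sufficiency: interleave the increasing enumerations
`p` of `S` and `q` of `[n] \ S` as `q₀ p₀ q₁ p₁ ⋯`; the criterion is exactly what makes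
`q_{j+1} < p_j`.

By the criterion, `S ∈ P_{n+1}` iff `S \ {n+1} ∈ P_n` and, when `n + 1 ∈ S`, `2|S| ≤ n`. Every
member of `P_n` has at most `(n - 1) / 2` elements, so for odd `n` the extra condition says
precisely that `S \ {n+1}` is not of that maximal size.
-/

section FinTwoProd

variable {α : Type*} [DecidableEq α]

theorem Finset.subset_iff_erase_subset_erase {a : α} {S S' : Finset α} :
    S ⊆ S' ↔ (a ∈ S → a ∈ S') ∧ S.erase a ⊆ S'.erase a := by
  refine ⟨fun h => ⟨@h a, erase_subset_erase a h⟩, fun ⟨ha, h⟩ x hx => ?_⟩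
  by_cases hxa : x = a
  · exact hxa ▸ ha (hxa ▸ hx)
  · exact mem_of_mem_erase (h (mem_erase.2 ⟨hxa, hx⟩))

theorem Fin.ite_one_zero_le_ite_one_zero {P P' : Prop} [Decidable P] [Decidable P'] :
    (if P then 1 else 0 : Fin 2) ≤ (if P' then 1 else 0) ↔ (P → P') := by
  split_ifs <;> simp_all

/-- `S ↦ (if a ∈ S then 1 else 0, S.erase a)`, for a family `A` made of the members `T` of `B`
and of the sets `insert a T` with `T ∈ B` and `¬ Q T`. -/
def Finset.orderIsoFinTwoProd (a : α) {A B : Finset (Finset α)} (Q : Finset α → Prop)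
    (hB : ∀ T ∈ B, a ∉ T) (hA : ∀ S, S ∈ A ↔ S.erase a ∈ B ∧ (a ∈ S → ¬ Q (S.erase a))) :
    {S // S ∈ A} ≃o {p : Fin 2 × {T // T ∈ B} // ¬ (p.1 = 1 ∧ Q p.2.val)} where
  toFun S := ⟨(if a ∈ S.1 then 1 else 0, ⟨S.1.erase a, ((hA S.1).1 S.2).1⟩), fun ⟨h1, hQ⟩ =>
    ((hA S.1).1 S.2).2 (by by_contra h; simp [h] at h1) hQ⟩
  invFun p := ⟨if p.1.1 = 1 then insert a p.1.2.1 else p.1.2.1, by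
    have ha := hB _ p.1.2.2
    split_ifs with h1
    · exact (hA _).2 ⟨by rw [erase_insert ha]; exact p.1.2.2,
        fun _ => by rw [erase_insert ha]; exact fun hQ => p.2 ⟨h1, hQ⟩⟩
    · exact (hA _).2 ⟨by rw [erase_eq_of_notMem ha]; exact p.1.2.2, fun h => absurd h ha⟩⟩
  left_inv S := by
    by_cases ha : a ∈ S.1 <;> ext1 <;> simp [ha]
  right_inv p := by
    obtain ⟨⟨b, T, hT⟩, hp⟩ := p
    have ha := hB T hT
    ext1
    fin_cases b <;> simp [ha]
  map_rel_iff' {S S'} := by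
    simp only [Equiv.coe_fn_mk, Subtype.mk_le_mk, Prod.mk_le_mk, Fin.ite_one_zero_le_ite_one_zero]
    exact (subset_iff_erase_subset_erase (a := a)).symm

end FinTwoProd

theorem two_mul_card_add_one_le_card_neighbours {T : Finset ℕ} (hT : T.Nonempty) (h0 : 0 ∉ T)
    (hsep : ∀ i ∈ T, i + 1 ∉ T) :
    2 * #T + 1 ≤ #(T.image (· - 1) ∪ T ∪ T.image (· + 1)) := by
  set a := T.min' hT
  have ha : a ∈ T := T.min'_mem hT
  have ha0 : a ≠ 0 := fun h => h0 (h ▸ ha)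
  have hdisj : Disjoint T (T.image (· + 1)) := by
    simp only [disjoint_right, mem_image]
    rintro _ ⟨i, hi, rfl⟩
    exact hsep i hi
  have hfresh : a - 1 ∉ T ∪ T.image (· + 1) := by
    simp only [mem_union, mem_image, not_or, not_exists, not_and]
    exact ⟨fun h => (T.min'_le _ h).not_gt (by omega),
      fun i hi h => (T.min'_le i hi).not_gt (by omega)⟩
  calc 2 * #T + 1 = #(insert (a - 1) (T ∪ T.image (· + 1))) := by
        rw [card_insert_of_notMem hfresh, card_union_of_disjoint hdisj,
          card_image_of_injective _ (add_left_injective 1)]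
        ring
    _ ≤ _ := by
        refine card_le_card (insert_subset ?_ ?_)
        · exact mem_union_left _ (mem_union_left _ (mem_image_of_mem _ ha))
        · exact union_subset_union subset_union_right subset_rfl

theorem Nat.count_ne_zero_not_add_count {p : ℕ → Prop} [DecidablePred p] (h0 : ¬ p 0) (m : ℕ) :
    Nat.count (fun x => x ≠ 0 ∧ ¬ p x) m + Nat.count p m = m - 1 := by
  induction m with
  | zero => simp
  | succ m ih =>
    rw [Nat.count_succ, Nat.count_succ]
    by_cases hm : p m
    · have : m ≠ 0 := fun h => h0 (h ▸ hm)
      rw [if_neg (fun h => h.2 hm), if_pos hm]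
      omega
    · rw [if_neg hm]
      by_cases h : m = 0
      · rw [if_neg (fun h' => h'.1 h)]
        omega
      · rw [if_pos ⟨h, hm⟩]
        omega

theorem Finset.lt_card_toFinset_ofPred_mem {S : Finset ℕ} {j : ℕ} (hj : j < #S) :
    ∀ hf : (Set.ofPred (· ∈ S)).Finite, j < #hf.toFinset := fun hf => by
  simpa using hj

theorem Finset.infinite_ofPred_ne_zero_notMem (S : Finset ℕ) :
    (Set.ofPred fun x => x ≠ 0 ∧ x ∉ S).Infinite := by
  have : (Set.ofPred fun x => x ≠ 0 ∧ x ∉ S) = (↑(insert 0 S) : Set ℕ)ᶜ := by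
    ext x; simp
  rw [this]
  exact (insert 0 S).finite_toSet.infinite_compl

theorem Finset.card_filter_le_eq_count (S : Finset ℕ) (s : ℕ) :
    #{x ∈ S | x ≤ s} = Nat.count (· ∈ S) (s + 1) := by
  rw [Nat.count_eq_card_filter_range]
  congr 1
  ext x
  simp only [mem_filter, mem_range, Nat.lt_succ_iff, and_comm]

def IsPeakAdmissible (n : ℕ) (S : Finset ℕ) : Prop :=
  S ⊆ Icc 1 n ∧ ∀ s ∈ S, 2 * #{x ∈ S | x ≤ s} < s

namespace IsPeakAdmissible

variable {n : ℕ} {S : Finset ℕ}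

theorem card_le (hS : IsPeakAdmissible n S) : #S ≤ (n - 1) / 2 := by
  rcases S.eq_empty_or_nonempty with rfl | hne
  · simp
  have hmax := hS.2 _ (S.max'_mem hne)
  rw [filter_true_of_mem fun x hx => S.le_max' x hx] at hmax
  have := (mem_Icc.1 (hS.1 (S.max'_mem hne))).2
  omega

theorem zero_notMem (hS : IsPeakAdmissible n S) : 0 ∉ S := fun h => by
  simpa using hS.1 h

end IsPeakAdmissible

theorem IsPermOn.card_le_of_forall_le {n s : ℕ} {σ : ℕ → ℕ} (hσ : IsPermOn n σ) {U : Finset ℕ}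
    (hU : ∀ i ∈ U, i ∈ Set.Icc 1 n ∧ σ i ≤ s) : #U ≤ s :=
  calc #U ≤ #(Icc 1 s) :=
        card_le_card_of_injOn σ (fun i hi => mem_Icc.2 ⟨(hσ.mapsTo (hU i hi).1).1, (hU i hi).2⟩)
          (hσ.injOn.mono fun i hi => (hU i hi).1)
    _ = s := by simp

/-- The peaks with value at most `s` sit at pairwise non-adjacent positions, and each of them and
its two neighbours carries a value in `[1, s]`. -/
theorem isPeakAdmissible_CP {n : ℕ} {σ : ℕ → ℕ} (hσ : IsPermOn n σ) :
    IsPeakAdmissible n (CP n σ) := by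
  set peaks := {i ∈ Icc 2 (n - 1) | σ (i - 1) < σ i ∧ σ (i + 1) < σ i}
  have hpeaks : ∀ i ∈ peaks, (2 ≤ i ∧ i ≤ n - 1) ∧ σ (i - 1) < σ i ∧ σ (i + 1) < σ i := by
    simp [peaks]
  refine ⟨fun x hx => ?_, fun s hs => ?_⟩
  · obtain ⟨i, hi, rfl⟩ := mem_image.1 hx
    have := hpeaks i hi
    exact mem_Icc.2 (hσ.mapsTo (show i ∈ Set.Icc 1 n from ⟨by omega, by omega⟩))
  obtain ⟨i₀, hi₀, rfl⟩ := mem_image.1 hs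
  set T := {i ∈ peaks | σ i ≤ σ i₀}
  have hT : ∀ i ∈ T, (2 ≤ i ∧ i ≤ n - 1) ∧ σ (i - 1) < σ i ∧ σ (i + 1) < σ i ∧ σ i ≤ σ i₀ := by
    intro i hi
    obtain ⟨hi, hle⟩ := mem_filter.1 hi
    exact ⟨(hpeaks i hi).1, (hpeaks i hi).2.1, (hpeaks i hi).2.2, hle⟩
  have hcard : #{x ∈ CP n σ | x ≤ σ i₀} = #T := by
    rw [CP, filter_image]
    exact card_image_of_injOn (hσ.injOn.mono fun i hi => by
      have := hT i hi
      exact ⟨by omega, by omega⟩)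
  have hneighbours := two_mul_card_add_one_le_card_neighbours (T := T)
    ⟨i₀, mem_filter.2 ⟨hi₀, le_rfl⟩⟩ (fun h => by have := hT 0 h; omega)
    (fun i hi hi' => by have := hT i hi; have := hT (i + 1) hi'; simp at this; omega)
  have hle : #(T.image (· - 1) ∪ T ∪ T.image (· + 1)) ≤ σ i₀ := by
    refine hσ.card_le_of_forall_le ?_
    simp only [mem_union, mem_image, Set.mem_Icc]
    rintro _ ((⟨i, hi, rfl⟩ | hi) | ⟨i, hi, rfl⟩) <;> have := hT _ hi <;> omega
  omega

/-- The word `q₀ p₀ q₁ p₁ ⋯ q_{k-1} p_{k-1} q_k q_{k+1} ⋯` (positions starting at `1`), where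
`p` and `q` enumerate `S` and the positive integers outside `S` increasingly and `k = #S`. -/
noncomputable def peakPerm (S : Finset ℕ) (i : ℕ) : ℕ :=
  if i ≤ 2 * #S then
    if i % 2 = 0 then Nat.nth (· ∈ S) (i / 2 - 1) else Nat.nth (fun x => x ≠ 0 ∧ x ∉ S) (i / 2)
  else Nat.nth (fun x => x ≠ 0 ∧ x ∉ S) (i - #S - 1)

section peakPerm

variable {n : ℕ} {S : Finset ℕ}

theorem peakPerm_two_mul_add_two {j : ℕ} (hj : j < #S) :
    peakPerm S (2 * j + 2) = Nat.nth (· ∈ S) j := by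
  rw [peakPerm, if_pos (by omega), if_pos (by omega)]
  congr 1
  omega

theorem peakPerm_two_mul_add_one {j : ℕ} (hj : j ≤ #S) :
    peakPerm S (2 * j + 1) = Nat.nth (fun x => x ≠ 0 ∧ x ∉ S) j := by
  unfold peakPerm
  split_ifs <;> first | omega | congr 1; omega

theorem peakPerm_of_lt {i : ℕ} (hi : 2 * #S < i) :
    peakPerm S i = Nat.nth (fun x => x ≠ 0 ∧ x ∉ S) (i - #S - 1) := by
  rw [peakPerm, if_neg (by omega)]

theorem IsPeakAdmissible.count_ne_zero_notMem_succ (hS : IsPeakAdmissible n S) :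
    Nat.count (fun x => x ≠ 0 ∧ x ∉ S) (n + 1) = n - #S := by
  have hsplit := Nat.count_ne_zero_not_add_count (p := (· ∈ S)) hS.zero_notMem (n + 1)
  have hall : #{x ∈ S | x ≤ n} = #S :=
    congrArg card (filter_true_of_mem fun x hx => (mem_Icc.1 (hS.1 hx)).2)
  rw [card_filter_le_eq_count] at hall
  omega

/-- The `j`-th peak value exceeds `2j + 2`, so at least `j + 2` non-peak values lie below it. -/
theorem IsPeakAdmissible.nth_ne_zero_notMem_succ_lt (hS : IsPeakAdmissible n S) {j : ℕ}
    (hj : j < #S) : Nat.nth (fun x => x ≠ 0 ∧ x ∉ S) (j + 1) < Nat.nth (· ∈ S) j := by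
  set p := Nat.nth (· ∈ S) j
  have hp : p ∈ S := Nat.nth_mem j (Finset.lt_card_toFinset_ofPred_mem hj)
  have hcount : Nat.count (· ∈ S) p = j := Nat.count_nth (Finset.lt_card_toFinset_ofPred_mem hj)
  have hbig := hS.2 p hp
  rw [card_filter_le_eq_count, Nat.count_succ, if_pos hp, hcount] at hbig
  have hsplit := Nat.count_ne_zero_not_add_count (p := (· ∈ S)) hS.zero_notMem p
  exact Nat.nth_lt_of_lt_count (by omega)

theorem peakPerm_lt_peakPerm_succ (hS : IsPeakAdmissible n S) {i : ℕ}
    (hi : i % 2 = 1 ∨ 2 * #S < i) : peakPerm S i < peakPerm S (i + 1) := by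
  have hmono := Nat.nth_strictMono (Finset.infinite_ofPred_ne_zero_notMem S)
  by_cases hik : 2 * #S < i
  · rw [peakPerm_of_lt hik, peakPerm_of_lt (by omega)]
    exact hmono (by omega)
  · obtain ⟨j, rfl⟩ : ∃ j, i = 2 * j + 1 := ⟨i / 2, by omega⟩
    rw [peakPerm_two_mul_add_one (by omega), peakPerm_two_mul_add_two (by omega)]
    exact (hmono j.lt_succ_self).trans (hS.nth_ne_zero_notMem_succ_lt (by omega))

theorem CP_peakPerm (hS : IsPeakAdmissible n S) : CP n (peakPerm S) = S := by
  have hk := hS.card_le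
  ext x
  simp only [CP, mem_image, mem_filter, mem_Icc]
  constructor
  · rintro ⟨i, ⟨⟨hi2, -⟩, hleft, hright⟩, rfl⟩
    have hpeak : ¬ (i % 2 = 1 ∨ 2 * #S < i) := fun h =>
      (peakPerm_lt_peakPerm_succ hS h).not_gt hright
    obtain ⟨j, rfl⟩ : ∃ j, i = 2 * j + 2 := ⟨i / 2 - 1, by omega⟩
    rw [peakPerm_two_mul_add_two (by omega)]
    exact Nat.nth_mem j (Finset.lt_card_toFinset_ofPred_mem (by omega))
  · intro hx
    set j := Nat.count (· ∈ S) x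
    have hj : j < #S := by simpa using Nat.count_lt_card S.finite_toSet hx
    refine ⟨2 * j + 2, ⟨⟨by omega, by omega⟩, ?_, ?_⟩, ?_⟩
    · exact peakPerm_lt_peakPerm_succ hS (by omega)
    · rw [show 2 * j + 2 + 1 = 2 * (j + 1) + 1 by ring, peakPerm_two_mul_add_one hj,
        peakPerm_two_mul_add_two hj]
      exact hS.nth_ne_zero_notMem_succ_lt hj
    · rw [peakPerm_two_mul_add_two hj]
      exact Nat.nth_count hx

theorem IsPeakAdmissible.nth_ne_zero_notMem_mem_Icc (hS : IsPeakAdmissible n S) {m : ℕ}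
    (hm : m < n - #S) : Nat.nth (fun x => x ≠ 0 ∧ x ∉ S) m ∈ Icc 1 n := by
  have hpos := (Nat.nth_mem_of_infinite (Finset.infinite_ofPred_ne_zero_notMem S) m).1
  have hlt : Nat.nth (fun x => x ≠ 0 ∧ x ∉ S) m < n + 1 :=
    Nat.nth_lt_of_lt_count (by rwa [hS.count_ne_zero_notMem_succ])
  exact mem_Icc.2 ⟨Nat.one_le_iff_ne_zero.2 hpos, by omega⟩

theorem mapsTo_peakPerm (hS : IsPeakAdmissible n S) :
    Set.MapsTo (peakPerm S) (Set.Icc 1 n) (Set.Icc 1 n) := by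
  have hk := hS.card_le
  intro i hi
  rw [Set.mem_Icc] at hi
  rw [← coe_Icc, mem_coe]
  by_cases hpeak : i % 2 = 0 ∧ i ≤ 2 * #S
  · obtain ⟨j, rfl⟩ : ∃ j, i = 2 * j + 2 := ⟨i / 2 - 1, by omega⟩
    rw [peakPerm_two_mul_add_two (by omega)]
    exact hS.1 (Nat.nth_mem j (Finset.lt_card_toFinset_ofPred_mem (by omega)))
  · by_cases hik : 2 * #S < i
    · rw [peakPerm_of_lt hik]
      exact hS.nth_ne_zero_notMem_mem_Icc (by omega)
    · obtain ⟨j, rfl⟩ : ∃ j, i = 2 * j + 1 := ⟨i / 2, by omega⟩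
      rw [peakPerm_two_mul_add_one (by omega)]
      exact hS.nth_ne_zero_notMem_mem_Icc (by omega)

theorem surjOn_peakPerm (hS : IsPeakAdmissible n S) :
    Set.SurjOn (peakPerm S) (Set.Icc 1 n) (Set.Icc 1 n) := by
  have hk := hS.card_le
  intro x hx
  rw [Set.mem_Icc] at hx
  by_cases hxS : x ∈ S
  · set j := Nat.count (· ∈ S) x
    have hj : j < #S := by simpa using Nat.count_lt_card S.finite_toSet hxS
    refine ⟨2 * j + 2, ⟨by omega, by omega⟩, ?_⟩
    rw [peakPerm_two_mul_add_two hj]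
    exact Nat.nth_count hxS
  · have hQx : x ≠ 0 ∧ x ∉ S := ⟨by omega, hxS⟩
    set j := Nat.count (fun x => x ≠ 0 ∧ x ∉ S) x
    have hj : j < n - #S := by
      rw [← hS.count_ne_zero_notMem_succ]
      exact Nat.count_strict_mono hQx (by omega)
    by_cases hjk : j ≤ #S
    · refine ⟨2 * j + 1, ⟨by omega, by omega⟩, ?_⟩
      rw [peakPerm_two_mul_add_one hjk]
      exact Nat.nth_count hQx
    · refine ⟨j + #S + 1, ⟨by omega, by omega⟩, ?_⟩
      rw [peakPerm_of_lt (by omega), show j + #S + 1 - #S - 1 = j by omega]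
      exact Nat.nth_count hQx

theorem isPermOn_peakPerm (hS : IsPeakAdmissible n S) : IsPermOn n (peakPerm S) :=
  ((Set.finite_Icc 1 n).surjOn_iff_bijOn_of_mapsTo (mapsTo_peakPerm hS)).1 (surjOn_peakPerm hS)

end peakPerm

theorem mem_Pn_iff {n : ℕ} {S : Finset ℕ} : S ∈ Pn n ↔ IsPeakAdmissible n S := by
  classical
  rw [Pn, mem_filter, mem_powerset]
  constructor
  · rintro ⟨-, σ, hσ, rfl⟩
    exact isPeakAdmissible_CP hσ
  · intro hS
    exact ⟨hS.1, peakPerm S, isPermOn_peakPerm hS, CP_peakPerm hS⟩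

theorem isPeakAdmissible_succ_iff {n : ℕ} {S : Finset ℕ} :
    IsPeakAdmissible (n + 1) S ↔
      IsPeakAdmissible n (S.erase (n + 1)) ∧ (n + 1 ∈ S → 2 * #S ≤ n) := by
  have hfilter_top : S ⊆ Icc 1 (n + 1) → #{x ∈ S | x ≤ n + 1} = #S := fun h =>
    congrArg card (filter_true_of_mem fun x hx => (mem_Icc.1 (h hx)).2)
  have hfilter_erase : ∀ s ≤ n, {x ∈ S.erase (n + 1) | x ≤ s} = {x ∈ S | x ≤ s} := by
    intro s hs
    rw [filter_erase, erase_eq_of_notMem (by simp; omega)]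
  have hsub : S ⊆ Icc 1 (n + 1) ↔ S.erase (n + 1) ⊆ Icc 1 n := by
    simp only [subset_iff, mem_erase, mem_Icc]
    refine ⟨fun h x hx => ?_, fun h x hx => ?_⟩
    · have := h hx.2
      omega
    · by_cases hx' : x = n + 1
      · omega
      · have := h ⟨hx', hx⟩
        omega
  constructor
  · rintro ⟨hS, hcond⟩
    refine ⟨⟨hsub.1 hS, fun s hs => ?_⟩, fun h => ?_⟩
    · have hsn := (mem_Icc.1 (hsub.1 hS hs)).2
      rw [hfilter_erase s hsn]
      exact hcond s (mem_of_mem_erase hs)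
    · have := hcond _ h
      rw [hfilter_top hS] at this
      omega
  · rintro ⟨⟨hS, hcond⟩, htop⟩
    refine ⟨hsub.2 hS, fun s hs => ?_⟩
    by_cases hsn : s = n + 1
    · subst hsn
      rw [hfilter_top (hsub.2 hS)]
      have := htop hs
      omega
    · have hs' : s ∈ S.erase (n + 1) := mem_erase.2 ⟨hsn, hs⟩
      rw [← hfilter_erase s (mem_Icc.1 (hS hs')).2]
      exact hcond s hs'

theorem mem_Pn_succ_iff_of_odd {n : ℕ} (hn : Odd n) {S : Finset ℕ} :
    S ∈ Pn (n + 1) ↔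
      S.erase (n + 1) ∈ Pn n ∧ (n + 1 ∈ S → ¬ #(S.erase (n + 1)) = (n - 1) / 2) := by
  rw [mem_Pn_iff, mem_Pn_iff, isPeakAdmissible_succ_iff]
  refine and_congr_right fun hS => imp_congr_right fun htop => ?_
  have := hS.card_le
  have := card_erase_add_one htop
  obtain ⟨t, rfl⟩ := hn
  omega

theorem Pn_succ_orderIso_odd_general (n : ℕ) (hodd : Odd n) :
    ∃ e : {S : Finset ℕ // S ∈ Pn (n + 1)} ≃o
        {p : Fin 2 × {S : Finset ℕ // S ∈ Pn n} //
          ¬ (p.1 = 1 ∧ p.2.val.card = (n - 1) / 2)},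
      ∀ S : {S : Finset ℕ // S ∈ Pn (n + 1)},
        ((e S).val.1 = 1 ↔ (n + 1) ∈ S.val) ∧
        ((e S).val.2 : Finset ℕ) = S.val.erase (n + 1) := by
  refine ⟨Finset.orderIsoFinTwoProd (n + 1) (fun T => #T = (n - 1) / 2)
    (fun T hT h => by simpa using (mem_Pn_iff.1 hT).1 h) fun S => mem_Pn_succ_iff_of_odd hodd,
    fun S => ⟨?_, rfl⟩⟩
  by_cases h : n + 1 ∈ S.val <;> simp [Finset.orderIsoFinTwoProd, h]

/-- Theorem 3.3 (odd case): for odd `n`, `P_{n+1}` is isomorphic to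
`(2 × P_n) \ ({1} × P_{n,⌊(n−1)/2⌋−1})`, via `S ↦ (1, S \ {n+1})` if `n+1 ∈ S`
and `S ↦ (0, S)` otherwise. -/
theorem Pn_succ_orderIso_odd (n : ℕ) (hn : 3 ≤ n) (hodd : Odd n) :
    ∃ e : {S : Finset ℕ // S ∈ Pn (n + 1)} ≃o
        {p : Fin 2 × {S : Finset ℕ // S ∈ Pn n} //
          ¬ (p.1 = 1 ∧ p.2.val.card = (n - 1) / 2)},
      ∀ S : {S : Finset ℕ // S ∈ Pn (n + 1)},
        ((e S).val.1 = 1 ↔ (n + 1) ∈ S.val) ∧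
        ((e S).val.2 : Finset ℕ) = S.val.erase (n + 1) :=
  Pn_succ_orderIso_odd_general n hodd
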